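/- arXiv:2109.14517 — 4 statements merged into one kernel-verified Lean document; each statement's English description precedes it below -/
import Mathlib

section
/- The shuffle product of two elements of V is again an element of V, i.e., the symmetrization in the definition of F * F' yields a symmetric Laurent polynomial (all apparent simple poles at z_{i,a} = z_{i,b} cancel upon symmetrization). -/
set_option linter.unusedSectionVars false

open MvPolynomial

noncomputable section

variable (F : Type) [Field F] [CharZero F]
variable (I : Type) [Fintype I] [DecidableEq I]
variable (E : Type) [Fintype E] [DecidableEq E]

/-- The field of rational functions in the variables `z_{i,a}`, `i ∈ I`, `a ∈ ℕ`. -/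
abbrev KK := FractionRing (MvPolynomial (I × ℕ) F)

/-- The variable `z_{i,a}` as an element of `KK`. -/
def zVar (v : I × ℕ) : KK F I := algebraMap (MvPolynomial (I × ℕ) F) (KK F I) (X v)

/-- Scalars from `F` inside `KK`. -/
def cst (x : F) : KK F I := algebraMap F (KK F I) x

/-- The structure function ζ_{ij}(x) of the (doubled) quiver with edge set `E`,
source/target maps `src`,`tgt`, and parameters `q`, `tp e`. -/
def zeta (src tgt : E → I) (q : F) (tp : E → F) (i j : I) (x : KK F I) : KK F I :=
  (if i = j then (1 - x * (cst F I q)⁻¹) / (1 - x) else 1) *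
  (∏ e : E, if src e = i ∧ tgt e = j then (cst F I (tp e))⁻¹ - x else 1) *
  (∏ e : E, if src e = j ∧ tgt e = i then 1 - cst F I (tp e) * (cst F I q * x)⁻¹ else 1)

/-- The subalgebra of Laurent polynomials in the variables `z_{i,a}`, `a < n i`. -/
def LaurentIn (n : I → ℕ) : Subalgebra F (KK F I) :=
  Algebra.adjoin F {x | ∃ i a, a < n i ∧ (x = zVar F I (i, a) ∨ x = (zVar F I (i, a))⁻¹)}

/-- The field automorphism of `KK` induced by a permutation of the variables. -/
def permHom (e : (I × ℕ) ≃ (I × ℕ)) : KK F I →+* KK F I :=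
  IsFractionRing.lift
    (g := (algebraMap (MvPolynomial (I × ℕ) F) (KK F I)).comp (rename (R := F) e).toRingHom)
    (by
      have h := (IsFractionRing.injective (MvPolynomial (I × ℕ) F) (KK F I)).comp
        (MvPolynomial.rename_injective (R := F) e e.injective)
      intro x y hxy
      exact h hxy)

/-- `f` is symmetric in the variables `z_{i,1},…,z_{i,n i}` for every colour `i` separately. -/
def SymIn (n : I → ℕ) (f : KK F I) : Prop :=
  ∀ e : (I × ℕ) ≃ (I × ℕ), (∀ p : I × ℕ, (e p).1 = p.1) →
    (∀ p : I × ℕ, n p.1 ≤ p.2 → e p = p) → permHom F I e f = f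

/-- The injective endomorphism of `KK` sending `z_{i,a} ↦ z_{i, a + n i}`
(shifting the variables of the second factor in the shuffle product). -/
def shiftHom (n : I → ℕ) : KK F I →+* KK F I :=
  IsFractionRing.lift
    (g := (algebraMap (MvPolynomial (I × ℕ) F) (KK F I)).comp
      (rename (R := F) (fun p : I × ℕ => (p.1, p.2 + n p.1))).toRingHom)
    (by
      have hinj : Function.Injective (fun p : I × ℕ => (p.1, p.2 + n p.1)) := by
        rintro ⟨i, a⟩ ⟨j, b⟩ h
        simp only [Prod.mk.injEq] at h
        obtain ⟨h1, h2⟩ := h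
        subst h1
        simp only [Prod.mk.injEq, true_and]
        omega
      have h := (IsFractionRing.injective (MvPolynomial (I × ℕ) F) (KK F I)).comp
        (MvPolynomial.rename_injective (R := F) _ hinj)
      intro x y hxy
      exact h hxy)

/-- The permutation of the variables `z_{i,a}`, `a < n i`, associated to a family of
permutations `σ i ∈ S_{n i}` (fixing all other variables). -/
def permOf (n : I → ℕ) (σ : ∀ i, Equiv.Perm (Fin (n i))) : (I × ℕ) ≃ (I × ℕ) where
  toFun p := (p.1, if h : p.2 < n p.1 then ((σ p.1) ⟨p.2, h⟩ : Fin (n p.1)).1 else p.2)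
  invFun p := (p.1, if h : p.2 < n p.1 then ((σ p.1)⁻¹ ⟨p.2, h⟩ : Fin (n p.1)).1 else p.2)
  left_inv := by
    rintro ⟨i, a⟩
    dsimp only
    by_cases h : a < n i
    · rw [dif_pos h]
      have h2 : (((σ i) ⟨a, h⟩ : Fin (n i)) : ℕ) < n i := ((σ i) ⟨a, h⟩).2
      rw [dif_pos h2]
      simp
    · rw [dif_neg h, dif_neg h]
  right_inv := by
    rintro ⟨i, a⟩
    dsimp only
    by_cases h : a < n i
    · rw [dif_pos h]
      have h2 : (((σ i)⁻¹ ⟨a, h⟩ : Fin (n i)) : ℕ) < n i := ((σ i)⁻¹ ⟨a, h⟩).2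
      rw [dif_pos h2]
      simp
    · rw [dif_neg h, dif_neg h]

/-- The kernel `∏_{i,j ∈ I} ∏_{a < n i} ∏_{b < n' j} ζ_{ij}(z_{i,a} / z_{j, n j + b})`. -/
def shufKernel (src tgt : E → I) (q : F) (tp : E → F) (n n' : I → ℕ) : KK F I :=
  ∏ i : I, ∏ j : I, ∏ a ∈ Finset.range (n i), ∏ b ∈ Finset.range (n' j),
    zeta F I E src tgt q tp i j (zVar F I (i, a) / zVar F I (j, n j + b))

/-- The shuffle product of `f` (in degree `n`) and `g` (in degree `n'`). -/
def shufMul (src tgt : E → I) (q : F) (tp : E → F) (n n' : I → ℕ) (f g : KK F I) : KK F I :=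
  ((∏ i : I, ((n i).factorial * (n' i).factorial) : ℕ) : KK F I)⁻¹ *
  ∑ σ : ∀ i, Equiv.Perm (Fin (n i + n' i)),
    permHom F I (permOf I (fun i => n i + n' i) σ)
      (f * shiftHom F I n g * shufKernel F I E src tgt q tp n n')

/-- Substitution of the first wheel condition: for an edge `e : i → j`,
set `z_{i,a} := q z_{i,c}` and `z_{j,b} := t_e z_{i,c}` (so that
`z_{i,a} = q z_{j,b} / t_e = q z_{i,c}`). -/
def wheelSubst₁ (src tgt : E → I) (q : F) (tp : E → F) (e : E) (a b c : ℕ) :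
    I × ℕ → KK F I := fun p =>
  if p = (src e, a) then cst F I q * zVar F I (src e, c)
  else if p = (tgt e, b) then cst F I (tp e) * zVar F I (src e, c)
  else zVar F I p

/-- Substitution of the second wheel condition: for an edge `e : i → j`,
set `z_{j,a} := q z_{j,c}` and `z_{i,b} := q z_{j,c} / t_e` (so that
`z_{j,a} = t_e z_{i,b} = q z_{j,c}`). -/
def wheelSubst₂ (src tgt : E → I) (q : F) (tp : E → F) (e : E) (a b c : ℕ) :
    I × ℕ → KK F I := fun p =>
  if p = (tgt e, a) then cst F I q * zVar F I (tgt e, c)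
  else if p = (src e, b) then cst F I q * (cst F I (tp e))⁻¹ * zVar F I (tgt e, c)
  else zVar F I p

/-- `f` (a Laurent polynomial in the variables `z_{i,a}`, `a < n i`) satisfies the
wheel conditions: writing `f = P / z^D`, the substitutions `wheelSubst₁`/`wheelSubst₂`
annihilate the numerator `P`. -/
def Wheel (src tgt : E → I) (q : F) (tp : E → F) (n : I → ℕ) (f : KK F I) : Prop :=
  ∀ e : E, ∀ a b c : ℕ,
    ∀ P : MvPolynomial (I × ℕ) F, ∀ D : (I × ℕ) →₀ ℕ,
      f * algebraMap (MvPolynomial (I × ℕ) F) (KK F I) (monomial D 1)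
        = algebraMap (MvPolynomial (I × ℕ) F) (KK F I) P →
      (a < n (src e) → c < n (src e) → b < n (tgt e) → a ≠ c →
        (src e = tgt e → a ≠ b ∧ b ≠ c) →
        aeval (wheelSubst₁ F I E src tgt q tp e a b c) P = 0) ∧
      (a < n (tgt e) → c < n (tgt e) → b < n (src e) → a ≠ c →
        (src e = tgt e → a ≠ b ∧ b ≠ c) →
        aeval (wheelSubst₂ F I E src tgt q tp e a b c) P = 0)

/-- `f` is a homogeneous rational function of total degree `d` in the variables. -/
def IsHomogRat (d : ℤ) (f : KK F I) : Prop :=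
  ∃ (P Q : MvPolynomial (I × ℕ) F) (dP dQ : ℕ),
    P.IsHomogeneous dP ∧ Q.IsHomogeneous dQ ∧ Q ≠ 0 ∧
    f = algebraMap (MvPolynomial (I × ℕ) F) (KK F I) P /
        algebraMap (MvPolynomial (I × ℕ) F) (KK F I) Q ∧
    (dP : ℤ) - (dQ : ℤ) = d

/-- The shift map `τ_k` in horizontal degree `n`:
multiplication by `∏_{i ∈ I, a < n i} z_{i,a}^{k i}`. -/
def tauShift (k : I → ℤ) (n : I → ℕ) (f : KK F I) : KK F I :=
  f * ∏ i : I, ∏ a ∈ Finset.range (n i), (zVar F I (i, a)) ^ (k i)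

/-- Auxiliary map: scaling the variables `z_{i,a}`, `a < k i`, by the formal
parameter `ξ = X` of `RatFunc`. -/
def phi1 (k : I → ℕ) : MvPolynomial (I × ℕ) F →+* Polynomial (MvPolynomial (I × ℕ) F) :=
  (MvPolynomial.aeval (R := F) (fun p : I × ℕ =>
    Polynomial.C (X p) * (if p.2 < k p.1 then Polynomial.X else 1))).toRingHom

lemma phi1_inj (k : I → ℕ) : Function.Injective (phi1 F I k) := by
  have h : (Polynomial.evalRingHom (1 : MvPolynomial (I × ℕ) F)).comp (phi1 F I k)
      = RingHom.id _ := by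
    apply MvPolynomial.ringHom_ext
    · intro a; simp [phi1]
    · intro p; by_cases h : p.2 < k p.1 <;> simp [phi1, h]
  intro x y hxy
  have hx := congrArg (Polynomial.evalRingHom (1 : MvPolynomial (I × ℕ) F)) hxy
  rw [← RingHom.comp_apply, ← RingHom.comp_apply, h, RingHom.id_apply, RingHom.id_apply] at hx
  exact hx

/-- The field embedding `KK → RatFunc KK` sending `z_{i,a} ↦ ξ · z_{i,a}` for `a < k i`
and fixing all other variables, where `ξ` is the variable of `RatFunc`. -/
def xiScale (k : I → ℕ) : KK F I →+* RatFunc (KK F I) :=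
  IsFractionRing.lift
    (g := ((algebraMap (Polynomial (KK F I)) (RatFunc (KK F I))).comp
      ((Polynomial.mapRingHom (algebraMap (MvPolynomial (I × ℕ) F) (KK F I))).comp
        (phi1 F I k))))
    (by
      have h1 := RatFunc.algebraMap_injective (KK F I)
      have h2 := Polynomial.map_injective (algebraMap (MvPolynomial (I × ℕ) F) (KK F I))
        (IsFractionRing.injective (MvPolynomial (I × ℕ) F) (KK F I))
      have h3 := phi1_inj F I k
      intro x y hxy
      apply h3; apply h2; apply h1
      exact hxy)

/-- The limit of `g / ξ^r` as `ξ → ∞` is finite. -/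
def LimFiniteAtInfty (g : RatFunc (KK F I)) (r : ℚ) : Prop :=
  g = 0 ∨ ((g.intDegree : ℚ) ≤ r)

/-- The number of edges `i → j` of the quiver. -/
def edgeCount (src tgt : E → I) (i j : I) : ℕ :=
  (Finset.univ.filter (fun e => src e = i ∧ tgt e = j)).card

/-- The bilinear form `⟨k, l⟩ = Σ_{i,j} k_i l_j #(i → j)`. -/
def formE (src tgt : E → I) (k l : I → ℕ) : ℚ :=
  ∑ i : I, ∑ j : I, (k i : ℚ) * (l j : ℚ) * (edgeCount I E src tgt i j : ℚ)

/-- The dot product `m · k`. -/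
def dotQ (m : I → ℚ) (k : I → ℕ) : ℚ := ∑ i : I, m i * (k i : ℚ)

/-- `f` (of horizontal degree `n`) has slope `≤ m`: for all `0 ≤ k ≤ n`, the limit
`lim_{ξ→∞} f(ξ z_{i,1},…,ξ z_{i,k_i}, z_{i,k_i+1},…) / ξ^{m·k + ⟨k, n−k⟩}` is finite. -/
def SlopeLE (src tgt : E → I) (m : I → ℚ) (n : I → ℕ) (f : KK F I) : Prop :=
  ∀ k : I → ℕ, (∀ i, k i ≤ n i) →
    LimFiniteAtInfty F I (xiScale F I k f)
      (dotQ I m k + formE I E src tgt k (fun i => n i - k i))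

/-!
Let `N = n + n'` and let `V = ∏ᵢ ∏_{a < b < N i} (z_{i,b} - z_{i,a})` be the product of the
colour-wise Vandermonde determinants. Multiplying by `V` clears all poles of the symmetrization:
the kernel's only poles are the simple poles of `ζ_{ii}` at `z_{i,a} = z_{i,n i + b}`, these
factors divide `V`, and a block permutation of the variables only multiplies `V` by a sign.
The symmetrization `S` is symmetric, so the Laurent polynomial `S · V = P / z^M` is antisymmetric
under every transposition `z_{i,a} ↔ z_{i,b}`. Hence `P` vanishes on `z_{i,a} = z_{i,b}`, so it is
divisible by these pairwise non-associated prime linear forms, i.e. by `V`, and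
`S = (P / V) / z^M` is a Laurent polynomial.
-/

section Laurent

open Finset

def activeVars (N : I → ℕ) : Set (I × ℕ) := {v | v.2 < N v.1}

@[simp]
lemma mem_activeVars {N : I → ℕ} {v : I × ℕ} : v ∈ activeVars I N ↔ v.2 < N v.1 := Iff.rfl

lemma algebraMap_X_eq_zVar (v : I × ℕ) :
    algebraMap (MvPolynomial (I × ℕ) F) (KK F I) (X v) = zVar F I v := rfl

lemma permHom_algebraMap (e : (I × ℕ) ≃ (I × ℕ)) (P : MvPolynomial (I × ℕ) F) :
    permHom F I e (algebraMap _ _ P) = algebraMap _ (KK F I) (rename e P) :=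
  IsFractionRing.lift_algebraMap _ _

lemma shiftHom_algebraMap (n : I → ℕ) (P : MvPolynomial (I × ℕ) F) :
    shiftHom F I n (algebraMap _ _ P)
      = algebraMap _ (KK F I) (rename (fun p : I × ℕ => (p.1, p.2 + n p.1)) P) :=
  IsFractionRing.lift_algebraMap _ _

lemma permHom_zVar (e : (I × ℕ) ≃ (I × ℕ)) (v : I × ℕ) :
    permHom F I e (zVar F I v) = zVar F I (e v) := by
  rw [← algebraMap_X_eq_zVar, permHom_algebraMap, rename_X, algebraMap_X_eq_zVar]

lemma shiftHom_zVar (n : I → ℕ) (v : I × ℕ) :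
    shiftHom F I n (zVar F I v) = zVar F I (v.1, v.2 + n v.1) := by
  rw [← algebraMap_X_eq_zVar, shiftHom_algebraMap, rename_X, algebraMap_X_eq_zVar]

lemma permHom_algebraMap_field (e : (I × ℕ) ≃ (I × ℕ)) (r : F) :
    permHom F I e (algebraMap F (KK F I) r) = algebraMap F (KK F I) r := by
  rw [IsScalarTower.algebraMap_apply F (MvPolynomial (I × ℕ) F), permHom_algebraMap,
    algebraMap_eq, rename_C]

lemma shiftHom_algebraMap_field (n : I → ℕ) (r : F) :
    shiftHom F I n (algebraMap F (KK F I) r) = algebraMap F (KK F I) r := by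
  rw [IsScalarTower.algebraMap_apply F (MvPolynomial (I × ℕ) F), shiftHom_algebraMap,
    algebraMap_eq, rename_C]

lemma permHom_permHom (e e' : (I × ℕ) ≃ (I × ℕ)) (x : KK F I) :
    permHom F I e (permHom F I e' x) = permHom F I (e'.trans e) x := by
  suffices h : (permHom F I e).comp (permHom F I e') = permHom F I (e'.trans e) from
    RingHom.congr_fun h x
  refine IsLocalization.ringHom_ext (nonZeroDivisors (MvPolynomial (I × ℕ) F)) ?_
  ext P <;> simp [permHom_algebraMap]

lemma zVar_ne_zero (v : I × ℕ) : zVar F I v ≠ 0 :=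
  (map_ne_zero_iff _ (IsFractionRing.injective _ _)).2 (X_ne_zero v)

lemma zVar_injective : Function.Injective (zVar F I) :=
  fun _ _ h => X_injective (IsFractionRing.injective (MvPolynomial (I × ℕ) F) (KK F I) h)

lemma zVar_mem_LaurentIn {N : I → ℕ} {v : I × ℕ} (hv : v ∈ activeVars I N) :
    zVar F I v ∈ LaurentIn F I N :=
  Algebra.subset_adjoin ⟨v.1, v.2, hv, Or.inl rfl⟩

lemma inv_zVar_mem_LaurentIn {N : I → ℕ} {v : I × ℕ} (hv : v ∈ activeVars I N) :
    (zVar F I v)⁻¹ ∈ LaurentIn F I N :=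
  Algebra.subset_adjoin ⟨v.1, v.2, hv, Or.inr rfl⟩

lemma map_mem_LaurentIn {N N' : I → ℕ} (ψ : KK F I →+* KK F I)
    (hF : ∀ r : F, ψ (algebraMap F _ r) = algebraMap F _ r)
    (hψ : ∀ v ∈ activeVars I N, ∃ w ∈ activeVars I N', ψ (zVar F I v) = zVar F I w)
    {x : KK F I} (hx : x ∈ LaurentIn F I N) : ψ x ∈ LaurentIn F I N' := by
  let ψ' : KK F I →ₐ[F] KK F I := { ψ with commutes' := hF }
  suffices h : LaurentIn F I N ≤ (LaurentIn F I N').comap ψ' from h hx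
  refine Algebra.adjoin_le ?_
  rintro y ⟨i, a, ha, rfl | rfl⟩ <;> obtain ⟨w, hw, hψw⟩ := hψ (i, a) ha
  · change ψ (zVar F I (i, a)) ∈ LaurentIn F I N'
    exact hψw ▸ zVar_mem_LaurentIn F I hw
  · change ψ (zVar F I (i, a))⁻¹ ∈ LaurentIn F I N'
    rw [map_inv₀, hψw]
    exact inv_zVar_mem_LaurentIn F I hw

lemma LaurentIn_mono {N N' : I → ℕ} (h : N ≤ N') : LaurentIn F I N ≤ LaurentIn F I N' :=
  Algebra.adjoin_mono fun _ ⟨i, a, ha, hx⟩ => ⟨i, a, ha.trans_le (h i), hx⟩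

lemma shiftHom_mem_LaurentIn {n n' : I → ℕ} {g : KK F I} (hg : g ∈ LaurentIn F I n') :
    shiftHom F I n g ∈ LaurentIn F I (fun i => n i + n' i) :=
  map_mem_LaurentIn F I _ (shiftHom_algebraMap_field F I n)
    (fun v hv => ⟨_, by simp at hv ⊢; omega, shiftHom_zVar F I n v⟩) hg

lemma algebraMap_mem_LaurentIn {N : I → ℕ} {P : MvPolynomial (I × ℕ) F}
    (hP : P ∈ supported F (activeVars I N)) :
    algebraMap _ (KK F I) P ∈ LaurentIn F I N := by
  suffices h : supported F (activeVars I N) ≤ (LaurentIn F I N).comap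
      (IsScalarTower.toAlgHom F (MvPolynomial (I × ℕ) F) (KK F I)) from h hP
  refine Algebra.adjoin_le ?_
  rintro _ ⟨v, hv, rfl⟩
  exact zVar_mem_LaurentIn F I hv

lemma monomial_mem_supported {S : Set (I × ℕ)} {M : (I × ℕ) →₀ ℕ} (hM : ↑M.support ⊆ S) :
    monomial M (1 : F) ∈ supported F S := by
  rwa [mem_supported, vars_monomial one_ne_zero]

lemma inv_monomial_mem_LaurentIn {N : I → ℕ} {M : (I × ℕ) →₀ ℕ}
    (hM : ↑M.support ⊆ activeVars I N) :
    (algebraMap _ (KK F I) (monomial M (1 : F)))⁻¹ ∈ LaurentIn F I N := by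
  rw [monomial_eq, C_1, one_mul, Finsupp.prod, map_prod, ← prod_inv_distrib]
  refine Subalgebra.prod_mem _ fun v hv => ?_
  rw [map_pow, ← inv_pow]
  exact pow_mem (inv_zVar_mem_LaurentIn F I (hM hv)) _

lemma mem_LaurentIn_iff {N : I → ℕ} {x : KK F I} :
    x ∈ LaurentIn F I N ↔ ∃ P ∈ supported F (activeVars I N), ∃ M : (I × ℕ) →₀ ℕ,
      ↑M.support ⊆ activeVars I N ∧
        x * algebraMap _ _ (monomial M (1 : F)) = algebraMap _ (KK F I) P := by
  constructor
  · intro hx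
    induction hx using Algebra.adjoin_induction with
    | mem y hy =>
      obtain ⟨i, a, ha, rfl | rfl⟩ := hy
      · exact ⟨X (i, a), X_mem_supported.2 ha, 0, by simp, by simp [zVar]⟩
      · refine ⟨1, one_mem _, Finsupp.single (i, a) 1, by simpa using ha, ?_⟩
        rw [← X, map_one, ← zVar, inv_mul_cancel₀ (zVar_ne_zero F I _)]
    | algebraMap r =>
      refine ⟨C r, Subalgebra.algebraMap_mem _ r, 0, by simp, ?_⟩
      rw [monomial_zero', C_1, map_one, mul_one, ← algebraMap_eq,
        ← IsScalarTower.algebraMap_apply]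
    | add x y _ _ ihx ihy =>
      obtain ⟨P, hP, M, hM, hx⟩ := ihx
      obtain ⟨Q, hQ, M', hM', hy⟩ := ihy
      refine ⟨P * monomial M' 1 + Q * monomial M 1,
        add_mem (mul_mem hP (monomial_mem_supported F I hM'))
          (mul_mem hQ (monomial_mem_supported F I hM)),
        M + M', ?_, ?_⟩
      · exact (Finset.coe_subset.2 Finsupp.support_add).trans (by simp [hM, hM'])
      · rw [show monomial (M + M') (1 : F) = monomial M 1 * monomial M' 1 by
          rw [monomial_mul, mul_one]]
        simp only [map_add, map_mul, ← hx, ← hy]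
        ring
    | mul x y _ _ ihx ihy =>
      obtain ⟨P, hP, M, hM, hx⟩ := ihx
      obtain ⟨Q, hQ, M', hM', hy⟩ := ihy
      refine ⟨P * Q, mul_mem hP hQ, M + M', ?_, ?_⟩
      · exact (Finset.coe_subset.2 Finsupp.support_add).trans (by simp [hM, hM'])
      · rw [show monomial (M + M') (1 : F) = monomial M 1 * monomial M' 1 by
          rw [monomial_mul, mul_one]]
        simp only [map_mul, ← hx, ← hy]
        ring
  · rintro ⟨P, hP, M, hM, hx⟩
    have hm : algebraMap _ (KK F I) (monomial M (1 : F)) ≠ 0 :=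
      (map_ne_zero_iff _ (IsFractionRing.injective _ _)).2 (by simp)
    rw [← eq_mul_inv_iff_mul_eq₀ hm] at hx
    rw [hx]
    exact mul_mem (algebraMap_mem_LaurentIn F I hP) (inv_monomial_mem_LaurentIn F I hM)

end Laurent

section BlockPerm
open Finset

variable {N : I → ℕ}

lemma permOf_apply_fin (σ : ∀ i, Equiv.Perm (Fin (N i))) (i : I) (a : Fin (N i)) :
    permOf I N σ (i, a) = (i, (σ i a : ℕ)) := by
  simp [permOf]

lemma permOf_apply_of_le (σ : ∀ i, Equiv.Perm (Fin (N i))) {p : I × ℕ} (hp : N p.1 ≤ p.2) :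
    permOf I N σ p = p := by
  simp [permOf, hp.not_gt]

lemma permOf_mem_activeVars (σ : ∀ i, Equiv.Perm (Fin (N i))) {p : I × ℕ}
    (hp : p ∈ activeVars I N) : permOf I N σ p ∈ activeVars I N := by
  obtain ⟨i, a⟩ := p
  simp [permOf, show a < N i from hp]

lemma permOf_trans (σ τ : ∀ i, Equiv.Perm (Fin (N i))) :
    (permOf I N σ).trans (permOf I N τ) = permOf I N (fun i => τ i * σ i) := by
  ext ⟨i, a⟩ : 1
  by_cases ha : a < N i
  · rw [Equiv.trans_apply, show (i, a) = (i, ((⟨a, ha⟩ : Fin (N i)) : ℕ)) from rfl,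
      permOf_apply_fin, permOf_apply_fin, permOf_apply_fin, Equiv.Perm.mul_apply]
  · rw [Equiv.trans_apply, permOf_apply_of_le I σ (not_lt.1 ha),
      permOf_apply_of_le I τ (not_lt.1 ha), permOf_apply_of_le I _ (not_lt.1 ha)]

lemma snd_apply_lt {e : (I × ℕ) ≃ (I × ℕ)} (hc : ∀ p, (e p).1 = p.1)
    (hf : ∀ p : I × ℕ, N p.1 ≤ p.2 → e p = p) {p : I × ℕ} (hp : p.2 < N p.1) :
    (e p).2 < N p.1 := by
  by_contra hle
  have hfix : e (e p) = e p := hf (e p) (by rw [hc]; exact not_lt.1 hle)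
  rw [e.injective hfix] at hle
  exact hle hp

lemma exists_permOf_eq (e : (I × ℕ) ≃ (I × ℕ)) (hc : ∀ p, (e p).1 = p.1)
    (hf : ∀ p : I × ℕ, N p.1 ≤ p.2 → e p = p) : ∃ σ, e = permOf I N σ := by
  have hc' : ∀ p, (e.symm p).1 = p.1 := fun p => by simpa using (hc (e.symm p)).symm
  have hf' : ∀ p : I × ℕ, N p.1 ≤ p.2 → e.symm p = p := fun p hp => by
    rw [Equiv.symm_apply_eq, hf p hp]
  have hcol : ∀ i c, (i, (e (i, c)).2) = e (i, c) := fun i c => Prod.ext (hc (i, c)).symm rfl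
  have hcol' : ∀ i c, (i, (e.symm (i, c)).2) = e.symm (i, c) := fun i c =>
    Prod.ext (hc' (i, c)).symm rfl
  refine ⟨fun i => ⟨fun a => ⟨(e (i, a)).2, snd_apply_lt I hc hf a.2⟩,
    fun a => ⟨(e.symm (i, a)).2, snd_apply_lt I hc' hf' a.2⟩, fun a => ?_, fun a => ?_⟩, ?_⟩
  · ext; simp [hcol]
  · ext; simp [hcol']
  · ext ⟨i, a⟩ : 1
    by_cases ha : a < N i
    · rw [show (i, a) = (i, ((⟨a, ha⟩ : Fin (N i)) : ℕ)) from rfl, permOf_apply_fin]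
      exact (hcol _ _).symm
    · rw [permOf_apply_of_le I _ (not_lt.1 ha), hf _ (not_lt.1 ha)]

lemma permHom_permOf_mem_LaurentIn (σ : ∀ i, Equiv.Perm (Fin (N i))) {x : KK F I}
    (hx : x ∈ LaurentIn F I N) : permHom F I (permOf I N σ) x ∈ LaurentIn F I N :=
  map_mem_LaurentIn F I _ (permHom_algebraMap_field F I _)
    (fun v hv => ⟨_, permOf_mem_activeVars I σ hv, permHom_zVar F I _ v⟩) hx

lemma permHom_permOf_sum (τ : ∀ i, Equiv.Perm (Fin (N i))) (x : KK F I) :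
    permHom F I (permOf I N τ)
        (∑ σ : ∀ i, Equiv.Perm (Fin (N i)), permHom F I (permOf I N σ) x)
      = ∑ σ : ∀ i, Equiv.Perm (Fin (N i)), permHom F I (permOf I N σ) x := by
  simp only [map_sum, permHom_permHom, permOf_trans]
  exact Equiv.sum_comp (Equiv.piCongrRight fun i => Equiv.mulLeft (τ i))
    (fun σ => permHom F I (permOf I N σ) x)

lemma symIn_sum_permHom_permOf (x : KK F I) :
    SymIn F I N (∑ σ : ∀ i, Equiv.Perm (Fin (N i)), permHom F I (permOf I N σ) x) := by
  intro e hc hf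
  obtain ⟨τ, rfl⟩ := exists_permOf_eq I e hc hf
  exact permHom_permOf_sum F I τ x

end BlockPerm

section LinearForms

variable {σ K : Type*} [DecidableEq σ]

lemma update_X_comp_swap [CommSemiring K] (v w : σ) :
    Function.update (X : σ → MvPolynomial σ K) v (X w) ∘ Equiv.swap v w
      = Function.update X v (X w) := by
  funext u
  simp only [Function.comp_apply, Function.update_apply, Equiv.swap_apply_def]
  split_ifs <;> simp_all


lemma X_sub_X_dvd_of_aeval_update_eq_zero [Field K] {v w : σ} {P : MvPolynomial σ K}
    (h : aeval (Function.update (X : σ → MvPolynomial σ K) v (X w)) P = 0) :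
    X v - X w ∣ P := by
  set J := Ideal.span {(X v - X w : MvPolynomial σ K)}
  have hmk : (Ideal.Quotient.mkₐ K J).comp (aeval (Function.update X v (X w)))
      = Ideal.Quotient.mkₐ K J := by
    refine algHom_ext fun u => ?_
    rcases eq_or_ne u v with rfl | hu
    · simp only [AlgHom.comp_apply, aeval_X, Function.update_self, Ideal.Quotient.mkₐ_eq_mk,
        Ideal.Quotient.mk_eq_mk_iff_sub_mem, J, Ideal.mem_span_singleton]
      exact ⟨-1, by ring⟩
    · simp [hu]
  rw [← Ideal.mem_span_singleton, ← Ideal.Quotient.eq_zero_iff_mem,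
    ← Ideal.Quotient.mkₐ_eq_mk K, ← hmk, AlgHom.comp_apply, h, map_zero]

lemma prime_X_sub_X [Field K] {v w : σ} (hvw : v ≠ w) :
    Prime (X v - X w : MvPolynomial σ K) := by
  set φ := aeval (R := K) (Function.update (X : σ → MvPolynomial σ K) v (X w))
  have hφ : φ (X v - X w) = 0 := by simp [φ, hvw.symm]
  refine ⟨sub_ne_zero.2 fun h => hvw (X_injective h), fun hu => ?_, fun P Q hPQ => ?_⟩
  · simpa [hφ] using hu.map φ
  · obtain ⟨R, hR⟩ := hPQ
    have : φ P * φ Q = 0 := by rw [← map_mul, hR, map_mul, hφ, zero_mul]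
    exact (mul_eq_zero.1 this).imp X_sub_X_dvd_of_aeval_update_eq_zero
      X_sub_X_dvd_of_aeval_update_eq_zero

lemma eq_or_eq_of_X_sub_X_dvd [Field K] {v w v' w' : σ} (hvw' : v' ≠ w')
    (h : (X v - X w : MvPolynomial σ K) ∣ X v' - X w') :
    (v' = v ∧ w' = w) ∨ (v' = w ∧ w' = v) := by
  have hφ : aeval (R := K) (Function.update (X : σ → MvPolynomial σ K) v (X w))
      (X v' - X w') = 0 := by
    obtain ⟨R, hR⟩ := h
    rw [hR, map_mul]
    rcases eq_or_ne v w with rfl | hvw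
    · simp
    · simp [hvw.symm]
  simp only [map_sub, aeval_X, Function.update_apply, sub_eq_zero] at hφ
  split_ifs at hφ with h1 h2 h2 <;> have := X_injective hφ <;> grind

lemma prod_X_sub_X_dvd [Field K] {ι : Type*} {t : Finset ι} {v w : ι → σ}
    {P : MvPolynomial σ K}
    (hne : ∀ x ∈ t, v x ≠ w x)
    (hinj : ∀ x ∈ t, ∀ y ∈ t, v x = v y → w x = w y → x = y)
    (hanti : ∀ x ∈ t, ∀ y ∈ t, v x = w y → w x ≠ v y)
    (hdvd : ∀ x ∈ t, X (v x) - X (w x) ∣ P) :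
    ∏ x ∈ t, (X (v x) - X (w x)) ∣ P := by
  refine Finset.prod_dvd_of_isRelPrime (fun x hx y hy hxy => ?_) hdvd
  refine ((prime_X_sub_X (hne x hx)).irreducible.isRelPrime_iff_not_dvd).2 fun h => ?_
  rcases eq_or_eq_of_X_sub_X_dvd (hne y hy) h with ⟨h1, h2⟩ | ⟨h1, h2⟩
  · exact hxy (hinj x hx y hy h1.symm h2.symm)
  · exact hanti x hx y hy h2.symm h1.symm

end LinearForms

lemma MvPolynomial.mem_supported_of_mul_mem {σ R : Type*} [CommRing R] [IsDomain R]
    {s : Set σ} {A B : MvPolynomial σ R} (hA0 : A ≠ 0) (hA : A ∈ supported R s)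
    (hAB : A * B ∈ supported R s) : B ∈ supported R s := by
  rw [supported_eq_range_rename] at hA hAB ⊢
  obtain ⟨A', rfl⟩ := hA
  obtain ⟨C', hC'⟩ := hAB
  set k := killCompl (R := R) (Subtype.val_injective (p := (· ∈ s)))
  have hk : ∀ Q, k (rename Subtype.val Q) = Q :=
    AlgHom.congr_fun (killCompl_comp_rename (Subtype.val_injective (p := (· ∈ s))))
  refine ⟨k B, mul_left_cancel₀ hA0 ?_⟩
  simp only [AlgHom.toRingHom_eq_coe, RingHom.coe_coe] at hC' ⊢
  calc rename Subtype.val A' * rename Subtype.val (k B)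
      = rename Subtype.val (k (rename Subtype.val A' * B)) := by rw [map_mul k, hk, map_mul]
    _ = rename Subtype.val A' * B := by rw [← hC', hk]

section Vandermonde
open Finset

def vandermondeIn (N : I → ℕ) : MvPolynomial (I × ℕ) F :=
  ∏ i, (Matrix.vandermonde fun a : Fin (N i) => (X (i, a) : MvPolynomial (I × ℕ) F)).det

lemma rename_permOf_vandermondeIn {N : I → ℕ} (σ : ∀ i, Equiv.Perm (Fin (N i))) :
    rename (permOf I N σ) (vandermondeIn F I N)
      = (((∏ i, Equiv.Perm.sign (σ i) : ℤˣ) : ℤ) : MvPolynomial (I × ℕ) F)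
        * vandermondeIn F I N := by
  have hcol : ∀ i, (rename (permOf I N σ)).mapMatrix
      (Matrix.vandermonde fun a : Fin (N i) => (X (i, a) : MvPolynomial (I × ℕ) F))
      = (Matrix.vandermonde fun a : Fin (N i) => (X (i, a) : MvPolynomial (I × ℕ) F)).submatrix
          (σ i) id := by
    intro i
    ext a b
    simp [Matrix.vandermonde, permOf_apply_fin]
  simp only [vandermondeIn, map_prod, AlgHom.map_det, hcol, Matrix.det_permute,
    prod_mul_distrib, Units.coe_prod, Int.cast_prod]

lemma vandermondeIn_eq_prod (N : I → ℕ) :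
    vandermondeIn F I N = ∏ x ∈ univ.sigma fun i => univ.sigma fun a : Fin (N i) => Ioi a,
      (X (x.1, (x.2.2 : ℕ)) - X (x.1, (x.2.1 : ℕ)) : MvPolynomial (I × ℕ) F) := by
  simp only [vandermondeIn, Matrix.det_vandermonde, prod_sigma]

lemma vandermondeIn_ne_zero (N : I → ℕ) : vandermondeIn F I N ≠ 0 := by
  refine prod_ne_zero_iff.2 fun i _ => Matrix.det_vandermonde_ne_zero_iff.2 fun a b h => ?_
  simpa [Fin.ext_iff] using X_injective h

lemma vandermondeIn_mem_supported (N : I → ℕ) :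
    vandermondeIn F I N ∈ supported F (activeVars I N) := by
  rw [vandermondeIn_eq_prod]
  exact prod_mem fun x _ =>
    sub_mem (X_mem_supported.2 x.2.2.2) (X_mem_supported.2 x.2.1.2)

lemma X_sub_X_dvd_vandermondeIn {N : I → ℕ} {i : I} {a b : Fin (N i)} (hab : a < b) :
    (X (i, (b : ℕ)) - X (i, (a : ℕ)) : MvPolynomial (I × ℕ) F) ∣ vandermondeIn F I N := by
  rw [vandermondeIn_eq_prod]
  exact dvd_prod_of_mem _ (a := (⟨i, a, b⟩ : Σ i, Σ _ : Fin (N i), Fin (N i)))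
    (by simpa using hab)

lemma vandermondeIn_dvd {N : I → ℕ} {P : MvPolynomial (I × ℕ) F}
    (h : ∀ i (a b : Fin (N i)), a < b → X (i, (b : ℕ)) - X (i, (a : ℕ)) ∣ P) :
    vandermondeIn F I N ∣ P := by
  rw [vandermondeIn_eq_prod]
  refine prod_X_sub_X_dvd ?_ ?_ ?_ ?_
  · rintro ⟨i, a, b⟩ hx
    simp only [mem_sigma, mem_univ, mem_Ioi, true_and] at hx
    simpa [Fin.ext_iff] using hx.ne'
  · rintro ⟨i, a, b⟩ - ⟨j, a', b'⟩ - hb ha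
    simp only [Prod.mk.injEq] at ha hb
    obtain ⟨rfl, hb⟩ := hb
    simp [Fin.ext_iff, ha.2, hb]
  · rintro ⟨i, a, b⟩ hx ⟨j, a', b'⟩ hy hba
    simp only [mem_sigma, mem_univ, mem_Ioi, true_and] at hx hy
    simp only [Prod.mk.injEq] at hba
    obtain ⟨rfl, hba⟩ := hba
    simp only [Fin.lt_def] at hx hy
    simp only [ne_eq, Prod.mk.injEq, true_and]
    omega
  · rintro ⟨i, a, b⟩ hx
    simp only [mem_sigma, mem_univ, mem_Ioi, true_and] at hx
    exact h i a b hx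

end Vandermonde

section Antisymmetry
open Finset

lemma permOf_mulSingle_swap {N : I → ℕ} (i : I) (a b : Fin (N i)) :
    permOf I N (Pi.mulSingle i (Equiv.swap a b)) = Equiv.swap (i, (a : ℕ)) (i, (b : ℕ)) := by
  ext ⟨j, c⟩ : 1
  by_cases hc : c < N j
  · rw [show (j, c) = (j, ((⟨c, hc⟩ : Fin (N j)) : ℕ)) from rfl, permOf_apply_fin]
    rcases eq_or_ne j i with rfl | hj
    · simp [Equiv.swap_apply_def, Fin.ext_iff]
      split_ifs <;> simp_all
    · simp [hj, Equiv.swap_apply_of_ne_of_ne]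
  · rw [permOf_apply_of_le I _ (not_lt.1 hc), Equiv.swap_apply_of_ne_of_ne] <;>
      rintro ⟨⟩ <;> omega

lemma rename_swap_vandermondeIn {N : I → ℕ} {i : I} {a b : Fin (N i)} (hab : a ≠ b) :
    rename (Equiv.swap (i, (a : ℕ)) (i, (b : ℕ))) (vandermondeIn F I N)
      = -vandermondeIn F I N := by
  rw [← permOf_mulSingle_swap, rename_permOf_vandermondeIn,
    Fintype.prod_eq_single i fun j hj => by simp [hj], Pi.mulSingle_eq_same,
    Equiv.Perm.sign_swap hab]
  simp

lemma X_sub_X_dvd_of_permHom_swap {y : KK F I} {v w : I × ℕ}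
    (hy : permHom F I (Equiv.swap v w) y = -y) {P : MvPolynomial (I × ℕ) F}
    {M : (I × ℕ) →₀ ℕ} (h : y * algebraMap _ _ (monomial M (1 : F)) = algebraMap _ _ P) :
    X v - X w ∣ P := by
  set s := Equiv.swap v w
  set m : MvPolynomial (I × ℕ) F := monomial M 1
  have hs : -y * algebraMap _ _ (rename s m) = algebraMap _ (KK F I) (rename s P) := by
    simpa only [map_mul, hy, permHom_algebraMap] using congrArg (permHom F I s) h
  have hanti : P * rename s m = -(rename s P * m) := by
    refine IsFractionRing.injective (MvPolynomial (I × ℕ) F) (KK F I) ?_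
    rw [map_mul, map_neg, map_mul, ← h, ← hs]
    ring
  set φ := aeval (R := F) (Function.update (X : I × ℕ → MvPolynomial (I × ℕ) F) v (X w))
  have hφs : ∀ Q, φ (rename s Q) = φ Q := fun Q => by
    rw [aeval_rename, update_X_comp_swap]
  have hφm : φ m ≠ 0 := by
    simp only [φ, m, aeval_monomial, map_one, one_mul, Finsupp.prod]
    refine prod_ne_zero_iff.2 fun u _ => pow_ne_zero _ ?_
    rw [Function.update_apply]
    split_ifs <;> exact X_ne_zero _
  have h2 : (2 : MvPolynomial (I × ℕ) F) * (φ P * φ m) = 0 := by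
    have := congrArg φ hanti
    rw [map_mul, map_neg, map_mul, hφs, hφs] at this
    linear_combination this
  have hφP : φ P = 0 := by simpa [hφm] using h2
  exact X_sub_X_dvd_of_aeval_update_eq_zero hφP

end Antisymmetry

section Symmetric

lemma SymIn.permHom_permOf {N : I → ℕ} {y : KK F I} (hy : SymIn F I N y)
    (σ : ∀ i, Equiv.Perm (Fin (N i))) : permHom F I (permOf I N σ) y = y :=
  hy _ (fun _ => rfl) fun _ hp => permOf_apply_of_le I σ hp

lemma SymIn.mem_LaurentIn_of_mul_vandermondeIn {N : I → ℕ} {y : KK F I} (hy : SymIn F I N y)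
    (hyV : y * algebraMap _ _ (vandermondeIn F I N) ∈ LaurentIn F I N) :
    y ∈ LaurentIn F I N := by
  obtain ⟨P, hP, M, hM, h⟩ := (mem_LaurentIn_iff F I).1 hyV
  have hdvd : vandermondeIn F I N ∣ P := by
    refine vandermondeIn_dvd F I fun i a b hab => X_sub_X_dvd_of_permHom_swap F I ?_ h
    rw [← permOf_mulSingle_swap, map_mul, hy.permHom_permOf, permHom_algebraMap,
      permOf_mulSingle_swap, rename_swap_vandermondeIn F I hab.ne', map_neg, mul_neg]
  obtain ⟨Q, rfl⟩ := hdvd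
  have hQ : Q ∈ supported F (activeVars I N) := mem_supported_of_mul_mem
    (vandermondeIn_ne_zero F I N) (vandermondeIn_mem_supported F I N) hP
  refine (mem_LaurentIn_iff F I).2 ⟨Q, hQ, M, hM, mul_left_cancel₀ ((map_ne_zero_iff _
    (IsFractionRing.injective _ (KK F I))).2 (vandermondeIn_ne_zero F I N)) ?_⟩
  rw [← map_mul, ← h]
  ring

lemma permHom_permOf_mul_vandermondeIn_mem {N : I → ℕ} {x : KK F I}
    (hx : x * algebraMap _ _ (vandermondeIn F I N) ∈ LaurentIn F I N)
    (σ : ∀ i, Equiv.Perm (Fin (N i))) :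
    permHom F I (permOf I N σ) x * algebraMap _ _ (vandermondeIn F I N) ∈ LaurentIn F I N := by
  have h := permHom_permOf_mem_LaurentIn F I σ hx
  rw [map_mul, permHom_algebraMap, rename_permOf_vandermondeIn, map_mul, map_intCast,
    mul_left_comm] at h
  rcases Int.units_eq_one_or (∏ i, Equiv.Perm.sign (σ i)) with hs | hs <;>
    simp only [hs, Units.val_one, Units.val_neg, Int.cast_one, Int.cast_neg, one_mul,
      neg_mul, neg_mem_iff] at h <;> exact h

end Symmetric

section Denominator
open Finset

def shufDenominator (n n' : I → ℕ) : MvPolynomial (I × ℕ) F :=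
  ∏ i, ∏ a ∈ range (n i), ∏ b ∈ range (n' i), (X (i, n i + b) - X (i, a))

variable (n n' : I → ℕ)

lemma shufDenominator_eq_prod : shufDenominator F I n n'
    = ∏ x ∈ univ.sigma fun i => range (n i) ×ˢ range (n' i),
        (X (x.1, n x.1 + x.2.2) - X (x.1, x.2.1) : MvPolynomial (I × ℕ) F) := by
  simp only [shufDenominator, prod_sigma, prod_product]

lemma shufDenominator_ne_zero : shufDenominator F I n n' ≠ 0 := by
  rw [shufDenominator_eq_prod]
  refine prod_ne_zero_iff.2 fun x hx => sub_ne_zero.2 fun h => ?_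
  simp only [mem_sigma, mem_univ, mem_product, mem_range, true_and] at hx
  have := (Prod.mk.inj (X_injective h)).2
  omega

lemma shufDenominator_mem_supported :
    shufDenominator F I n n' ∈ supported F (activeVars I fun i => n i + n' i) := by
  rw [shufDenominator_eq_prod]
  refine prod_mem fun x hx => sub_mem (X_mem_supported.2 ?_) (X_mem_supported.2 ?_) <;>
    simp only [mem_sigma, mem_univ, mem_product, mem_range, true_and] at hx <;>
    simp only [mem_activeVars] <;> omega

lemma shufDenominator_dvd_vandermondeIn :
    shufDenominator F I n n' ∣ vandermondeIn F I fun i => n i + n' i := by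
  rw [shufDenominator_eq_prod]
  refine prod_X_sub_X_dvd ?_ ?_ ?_ ?_
  · rintro ⟨i, a, b⟩ hx
    simp only [mem_sigma, mem_univ, mem_product, mem_range, true_and] at hx
    simp only [ne_eq, Prod.mk.injEq, true_and]
    omega
  · rintro ⟨i, a, b⟩ - ⟨j, a', b'⟩ - hb ha
    dsimp only at hb ha
    obtain ⟨rfl, hb⟩ := Prod.mk.inj hb
    obtain ⟨-, rfl⟩ := Prod.mk.inj ha
    obtain rfl : b = b' := by omega
    rfl
  · rintro ⟨i, a, b⟩ - ⟨j, a', b'⟩ hy h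
    dsimp only at h ⊢
    simp only [mem_sigma, mem_univ, mem_product, mem_range, true_and] at hy
    obtain ⟨rfl, h⟩ := Prod.mk.inj h
    omega
  · rintro ⟨i, a, b⟩ hx
    simp only [mem_sigma, mem_univ, mem_product, mem_range, true_and] at hx
    dsimp only
    exact X_sub_X_dvd_vandermondeIn F I (N := fun i => n i + n' i)
      (a := ⟨a, by omega⟩) (b := ⟨n i + b, by omega⟩) (Fin.mk_lt_mk.2 (by omega))

end Denominator

section Kernel
open Finset

variable {src tgt : E → I} {q : F} {tp : E → F}

lemma zeta_mul_mem {A : Subalgebra F (KK F I)} {y z : KK F I} (hy : y ∈ A) (hy' : y⁻¹ ∈ A)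
    (hz : z ∈ A) (hz' : z⁻¹ ∈ A) (hz0 : z ≠ 0) (hyz : y ≠ z) (i j : I) :
    zeta F I E src tgt q tp i j (y / z) * (if i = j then z - y else 1) ∈ A := by
  have hcst : ∀ r : F, cst F I r ∈ A := fun r => A.algebraMap_mem r
  have hcst' : ∀ r : F, (cst F I r)⁻¹ ∈ A := fun r => by
    rw [cst, ← map_inv₀]; exact A.algebraMap_mem _
  have hx : y / z ∈ A := by rw [div_eq_mul_inv]; exact mul_mem hy hz'
  have hx' : (y / z)⁻¹ ∈ A := by rw [inv_div, div_eq_mul_inv]; exact mul_mem hz hy'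
  have hB : (∏ e : E, if src e = i ∧ tgt e = j then (cst F I (tp e))⁻¹ - y / z else 1) ∈ A :=
    prod_mem fun e _ => by split_ifs <;> first | exact one_mem _ | exact sub_mem (hcst' _) hx
  have hC : (∏ e : E, if src e = j ∧ tgt e = i then
      1 - cst F I (tp e) * (cst F I q * (y / z))⁻¹ else 1) ∈ A := by
    refine prod_mem fun e _ => ?_
    split_ifs
    · rw [mul_inv_rev]
      exact sub_mem (one_mem _) (mul_mem (hcst _) (mul_mem hx' (hcst' _)))
    · exact one_mem _
  rw [zeta]
  split_ifs with hij
  · have h1x : 1 - y / z ≠ 0 := by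
      rw [sub_ne_zero, ne_eq, eq_div_iff hz0, one_mul]
      exact hyz.symm
    have hpole : (1 - y / z * (cst F I q)⁻¹) / (1 - y / z) * (z - y)
        = (1 - y / z * (cst F I q)⁻¹) * z := by
      field_simp
    rw [mul_right_comm, mul_right_comm _ _ (z - y), hpole]
    exact mul_mem (mul_mem (mul_mem (sub_mem (one_mem _) (mul_mem hx (hcst' q))) hz) hB) hC
  · rw [one_mul, mul_one]
    exact mul_mem hB hC

lemma shufKernel_mul_shufDenominator_mem (n n' : I → ℕ) :
    shufKernel F I E src tgt q tp n n' * algebraMap _ _ (shufDenominator F I n n')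
      ∈ LaurentIn F I (fun i => n i + n' i) := by
  have hD : algebraMap _ (KK F I) (shufDenominator F I n n')
      = ∏ i, ∏ j, ∏ a ∈ range (n i), ∏ b ∈ range (n' j),
          if i = j then zVar F I (j, n j + b) - zVar F I (i, a) else 1 := by
    simp only [shufDenominator, map_prod, map_sub, algebraMap_X_eq_zVar]
    refine prod_congr rfl fun i _ => ?_
    rw [Fintype.prod_eq_single i fun j hj => by simp [Ne.symm hj]]
    simp
  rw [hD, shufKernel]
  simp only [← prod_mul_distrib]
  refine prod_mem fun i _ => prod_mem fun j _ => prod_mem fun a ha => prod_mem fun b hb => ?_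
  rw [mem_range] at ha hb
  have hva : (i, a) ∈ activeVars I (fun i => n i + n' i) := by simp; omega
  have hvb : (j, n j + b) ∈ activeVars I (fun i => n i + n' i) := by simp; omega
  refine zeta_mul_mem F I E (zVar_mem_LaurentIn F I hva) (inv_zVar_mem_LaurentIn F I hva)
    (zVar_mem_LaurentIn F I hvb) (inv_zVar_mem_LaurentIn F I hvb) (zVar_ne_zero F I _)
    (fun h => ?_) i j
  obtain ⟨rfl, rfl⟩ := Prod.mk.inj (zVar_injective F I h)
  omega

end Kernel

lemma shufMul_integrand_mul_vandermondeIn_mem (src tgt : E → I) (q : F) (tp : E → F)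
    {n n' : I → ℕ} {f g : KK F I} (hf : f ∈ LaurentIn F I n) (hg : g ∈ LaurentIn F I n') :
    f * shiftHom F I n g * shufKernel F I E src tgt q tp n n'
        * algebraMap _ _ (vandermondeIn F I fun i => n i + n' i)
      ∈ LaurentIn F I (fun i => n i + n' i) := by
  obtain ⟨W, hW⟩ := shufDenominator_dvd_vandermondeIn F I n n'
  have hWs : W ∈ supported F (activeVars I fun i => n i + n' i) :=
    mem_supported_of_mul_mem (shufDenominator_ne_zero F I n n')
      (shufDenominator_mem_supported F I n n') (hW ▸ vandermondeIn_mem_supported F I _)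
  have hfN : f ∈ LaurentIn F I (fun i => n i + n' i) :=
    LaurentIn_mono F I (fun i => Nat.le_add_right _ _) hf
  rw [hW, map_mul]
  convert mul_mem (mul_mem (mul_mem hfN (shiftHom_mem_LaurentIn F I hg))
    (algebraMap_mem_LaurentIn F I hWs)) (shufKernel_mul_shufDenominator_mem F I E n n')
    using 1
  ring

theorem shuffle_product_mem
    (src tgt : E → I) (q : F) (tp : E → F)
    (n n' : I → ℕ) (f g : KK F I)
    (hf : f ∈ LaurentIn F I n)
    (hg : g ∈ LaurentIn F I n') :
    shufMul F I E src tgt q tp n n' f g ∈ LaurentIn F I (fun i => n i + n' i) ∧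
    SymIn F I (fun i => n i + n' i) (shufMul F I E src tgt q tp n n' f g) := by
  set S := ∑ σ : ∀ i, Equiv.Perm (Fin (n i + n' i)), permHom F I (permOf I _ σ)
    (f * shiftHom F I n g * shufKernel F I E src tgt q tp n n')
  have hS : SymIn F I (fun i => n i + n' i) S := symIn_sum_permHom_permOf F I _
  have hSV : S * algebraMap _ _ (vandermondeIn F I fun i => n i + n' i)
      ∈ LaurentIn F I (fun i => n i + n' i) := by
    rw [Finset.sum_mul]
    exact sum_mem fun σ _ => permHom_permOf_mul_vandermondeIn_mem F I
      (shufMul_integrand_mul_vandermondeIn_mem F I E src tgt q tp hf hg) σ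
  constructor
  · refine mul_mem ?_ (hS.mem_LaurentIn_of_mul_vandermondeIn F I hSV)
    rw [← map_natCast (algebraMap F (KK F I)), ← map_inv₀]
    exact Subalgebra.algebraMap_mem _ _
  · intro e hc hfix
    rw [shufMul, map_mul, map_inv₀, map_natCast, hS e hc hfix]

end
end

section
/- An element F ∈ S with horizontal degree n has slope ≤ m if and only if for every 0 ≤ k ≤ n and every monomial ∏ z_{i,a}^{d_{i,a}} appearing in F, the sum of the exponents over any choice of k_i of the i-colored variables (for each i) is at most m·k + ⟨k, n−k⟩, where it suffices to check this for the variables z_{i,1},...,z_{i,k_i} by symmetry of F. -/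
/-!
Give the variables `z_{i,a}` with `a < k_i` weight one and all others weight zero. Substituting
`ξ z_{i,a}` for these variables sends a polynomial `P` to the polynomial in `ξ` whose coefficient
of `ξ^d` is the weighted-homogeneous component of `P` of degree `d`, so its `ξ`-degree is the
largest weight of a monomial of `P`. Writing the Laurent polynomial `f` as `P / z^D`, the
`ξ`-degree of the scaled `f` is therefore the largest weight of a monomial of `P` minus the weight
of `D`, and the limit defining the slope is finite exactly when every monomial obeys the bound.
-/

set_option linter.unusedSectionVars false

open MvPolynomial

section XiWeight

variable {I : Type} [Fintype I] [DecidableEq I]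

def xiWeight (k : I → ℕ) (p : I × ℕ) : ℕ := if p.2 < k p.1 then 1 else 0

lemma weight_xiWeight (k : I → ℕ) (μ : (I × ℕ) →₀ ℕ) :
    Finsupp.weight (xiWeight k) μ = ∑ i, ∑ a ∈ Finset.range (k i), μ (i, a) := by
  induction μ using Finsupp.induction_linear with
  | zero => simp
  | add μ ν hμ hν => simp only [map_add, hμ, hν, Finsupp.add_apply, Finset.sum_add_distrib]
  | single p c =>
    obtain ⟨i, a⟩ := p
    simp [Finsupp.weight_single, xiWeight, Finsupp.single_apply, ite_and, Finset.sum_ite_eq]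

lemma sum_range_sub_eq_weight_xiWeight (k : I → ℕ) (μ D : (I × ℕ) →₀ ℕ) :
    ∑ i, ∑ a ∈ Finset.range (k i), ((μ (i, a) : ℤ) - D (i, a))
      = (Finsupp.weight (xiWeight k) μ : ℤ) - Finsupp.weight (xiWeight k) D := by
  simp only [weight_xiWeight, Finset.sum_sub_distrib, Nat.cast_sum]

end XiWeight

lemma MvPolynomial.exists_weight_eq_weightedTotalDegree {σ R M : Type*} [CommSemiring R]
    [AddCommMonoid M] [LinearOrder M] [OrderBot M] (w : σ → M) {P : MvPolynomial σ R}
    (hP : P ≠ 0) : ∃ μ ∈ P.support, Finsupp.weight w μ = weightedTotalDegree w P := by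
  obtain ⟨μ, hμ, hμmax⟩ := Finset.exists_mem_eq_sup _ (support_nonempty.mpr hP) (Finsupp.weight w)
  exact ⟨μ, hμ, hμmax.symm⟩

section Phi1

variable {F : Type} [Field F] {I : Type}

lemma phi1_monomial (k : I → ℕ) (d : (I × ℕ) →₀ ℕ) (r : F) :
    phi1 F I k (monomial d r)
      = Polynomial.monomial (Finsupp.weight (xiWeight k) d) (monomial d r) := by
  have hX : ∀ p : I × ℕ,
      (Polynomial.C (X p) * if p.2 < k p.1 then Polynomial.X else 1 :
        Polynomial (MvPolynomial (I × ℕ) F))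
      = Polynomial.C (X p) * Polynomial.X ^ xiWeight k p := fun p => by
    unfold xiWeight; split_ifs <;> simp
  simp only [phi1, AlgHom.toRingHom_eq_coe, RingHom.coe_coe, aeval_monomial, hX, mul_pow,
    Finsupp.prod_mul, ← pow_mul, ← map_pow, ← map_finsuppProd]
  rw [monomial_eq, Finsupp.weight_apply, ← Polynomial.C_mul_X_pow_eq_monomial]
  simp only [Finsupp.prod, Finsupp.sum, Finset.prod_pow_eq_pow_sum, smul_eq_mul,
    mul_comm _ (xiWeight k _), Polynomial.algebraMap_apply, algebraMap_eq, Polynomial.C_mul,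
    mul_assoc]

lemma coeff_phi1 (k : I → ℕ) (P : MvPolynomial (I × ℕ) F) (n : ℕ) :
    (phi1 F I k P).coeff n = weightedHomogeneousComponent (xiWeight k) n P := by
  conv_lhs => rw [P.as_sum]
  simp only [map_sum, phi1_monomial, Polynomial.finsetSum_coeff, Polynomial.coeff_monomial,
    weightedHomogeneousComponent_apply, Finset.sum_filter]

lemma natDegree_phi1 (k : I → ℕ) {P : MvPolynomial (I × ℕ) F} (hP : P ≠ 0) :
    (phi1 F I k P).natDegree = weightedTotalDegree (xiWeight k) P := by
  obtain ⟨μ, hμ, hμmax⟩ := exists_weight_eq_weightedTotalDegree (xiWeight k) hP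
  apply Polynomial.natDegree_eq_of_le_of_coeff_ne_zero
  · refine Polynomial.natDegree_le_iff_coeff_eq_zero.mpr fun n hn => ?_
    rw [coeff_phi1, weightedHomogeneousComponent_eq_zero _ _ (by exact_mod_cast hn)]
  · intro h
    have := congrArg (coeff μ) ((coeff_phi1 k P _).symm.trans h)
    rw [coeff_weightedHomogeneousComponent, ← hμmax, if_pos rfl, coeff_zero] at this
    exact mem_support_iff.mp hμ this

end Phi1

section LaurentRepresentation

variable {F : Type} [Field F] {I : Type}

lemma ne_zero_of_mul_monomial_eq {f : KK F I} (hf : f ≠ 0)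
    {P : MvPolynomial (I × ℕ) F} {D : (I × ℕ) →₀ ℕ}
    (hPD : f * algebraMap (MvPolynomial (I × ℕ) F) (KK F I) (monomial D 1)
      = algebraMap (MvPolynomial (I × ℕ) F) (KK F I) P) : P ≠ 0 := by
  rintro rfl
  simp [hf] at hPD

lemma algebraMap_monomial_add (D₁ D₂ : (I × ℕ) →₀ ℕ) :
    algebraMap (MvPolynomial (I × ℕ) F) (KK F I) (monomial (D₁ + D₂) 1)
      = algebraMap (MvPolynomial (I × ℕ) F) (KK F I) (monomial D₁ 1)
        * algebraMap (MvPolynomial (I × ℕ) F) (KK F I) (monomial D₂ 1) := by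
  rw [← map_mul, monomial_mul, one_mul]

lemma exists_mul_monomial_eq_of_mem_laurentIn {n : I → ℕ} {f : KK F I}
    (hf : f ∈ LaurentIn F I n) :
    ∃ (P : MvPolynomial (I × ℕ) F) (D : (I × ℕ) →₀ ℕ),
      f * algebraMap (MvPolynomial (I × ℕ) F) (KK F I) (monomial D 1)
        = algebraMap (MvPolynomial (I × ℕ) F) (KK F I) P := by
  have mul_monomial_zero : ∀ x : KK F I,
      x * algebraMap (MvPolynomial (I × ℕ) F) (KK F I) (monomial 0 1) = x := fun x => by
    rw [monomial_zero', C_1, map_one, mul_one]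
  induction hf using Algebra.adjoin_induction with
  | mem x hx =>
    obtain ⟨i, a, -, rfl | rfl⟩ := hx
    · exact ⟨X (i, a), 0, mul_monomial_zero _⟩
    · have hz : zVar F I (i, a) ≠ 0 :=
        (map_ne_zero_iff _ (IsFractionRing.injective _ _)).mpr (X_ne_zero _)
      exact ⟨1, Finsupp.single (i, a) 1, (inv_mul_cancel₀ hz).trans (map_one _).symm⟩
  | algebraMap r =>
    exact ⟨C r, 0, by rw [mul_monomial_zero, ← algebraMap_eq, ← IsScalarTower.algebraMap_apply]⟩
  | add x y _ _ hx hy =>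
    obtain ⟨P₁, D₁, h₁⟩ := hx
    obtain ⟨P₂, D₂, h₂⟩ := hy
    refine ⟨P₁ * monomial D₂ 1 + P₂ * monomial D₁ 1, D₁ + D₂, ?_⟩
    rw [algebraMap_monomial_add, map_add, map_mul, map_mul, ← h₁, ← h₂]
    ring
  | mul x y _ _ hx hy =>
    obtain ⟨P₁, D₁, h₁⟩ := hx
    obtain ⟨P₂, D₂, h₂⟩ := hy
    refine ⟨P₁ * P₂, D₁ + D₂, ?_⟩
    rw [algebraMap_monomial_add, map_mul, ← h₁, ← h₂]
    ring

end LaurentRepresentation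

section XiScale

variable {F : Type} [Field F] [CharZero F] {I : Type} [Fintype I] [DecidableEq I]

lemma xiScale_algebraMap (k : I → ℕ) (Q : MvPolynomial (I × ℕ) F) :
    xiScale F I k (algebraMap (MvPolynomial (I × ℕ) F) (KK F I) Q)
      = algebraMap (Polynomial (KK F I)) (RatFunc (KK F I))
          ((phi1 F I k Q).map (algebraMap (MvPolynomial (I × ℕ) F) (KK F I))) :=
  IsFractionRing.lift_algebraMap _ Q

lemma intDegree_xiScale_algebraMap (k : I → ℕ) {Q : MvPolynomial (I × ℕ) F} (hQ : Q ≠ 0) :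
    (xiScale F I k (algebraMap (MvPolynomial (I × ℕ) F) (KK F I) Q)).intDegree
      = weightedTotalDegree (xiWeight k) Q := by
  rw [xiScale_algebraMap, RatFunc.intDegree_polynomial,
    Polynomial.natDegree_map_eq_of_injective (IsFractionRing.injective _ _), natDegree_phi1 k hQ]

lemma intDegree_xiScale_of_mul_monomial_eq (k : I → ℕ) {f : KK F I} (hf : f ≠ 0)
    {P : MvPolynomial (I × ℕ) F} {D : (I × ℕ) →₀ ℕ}
    (hPD : f * algebraMap (MvPolynomial (I × ℕ) F) (KK F I) (monomial D 1)
      = algebraMap (MvPolynomial (I × ℕ) F) (KK F I) P) :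
    (xiScale F I k f).intDegree
      = ((weightedTotalDegree (xiWeight k) P : ℕ) : ℤ) - Finsupp.weight (xiWeight k) D := by
  classical
  have hD : (monomial D (1 : F)) ≠ 0 := monomial_eq_zero.not.mpr one_ne_zero
  have hP := ne_zero_of_mul_monomial_eq hf hPD
  have hdeg := congrArg (fun g => (xiScale F I k g).intDegree) hPD
  simp only [map_mul] at hdeg
  rw [RatFunc.intDegree_mul (by simpa using hf) (by simp),
    intDegree_xiScale_algebraMap k hD, intDegree_xiScale_algebraMap k hP,
    weightedTotalDegree, support_monomial, if_neg one_ne_zero, Finset.sup_singleton] at hdeg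
  omega

lemma limFiniteAtInfty_xiScale_iff (k : I → ℕ) {f : KK F I}
    {P : MvPolynomial (I × ℕ) F} {D : (I × ℕ) →₀ ℕ}
    (hPD : f * algebraMap (MvPolynomial (I × ℕ) F) (KK F I) (monomial D 1)
      = algebraMap (MvPolynomial (I × ℕ) F) (KK F I) P) (r : ℚ) :
    LimFiniteAtInfty F I (xiScale F I k f) r ↔ ∀ μ ∈ P.support,
      (((Finsupp.weight (xiWeight k) μ : ℤ) - Finsupp.weight (xiWeight k) D : ℤ) : ℚ) ≤ r := by
  by_cases hf : f = 0
  · have hP : P = 0 := IsFractionRing.injective _ (KK F I) (by rw [← hPD, hf, zero_mul, map_zero])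
    simp [LimFiniteAtInfty, hf, hP]
  rw [LimFiniteAtInfty, or_iff_right ((map_ne_zero _).mpr hf),
    intDegree_xiScale_of_mul_monomial_eq k hf hPD]
  push_cast
  constructor
  · intro h μ hμ
    have hμP : (Finsupp.weight (xiWeight k) μ : ℚ) ≤ weightedTotalDegree (xiWeight k) P := by
      exact_mod_cast le_weightedTotalDegree (xiWeight k) hμ
    linarith
  · intro h
    obtain ⟨μ, hμ, hμmax⟩ :=
      exists_weight_eq_weightedTotalDegree (xiWeight k) (ne_zero_of_mul_monomial_eq hf hPD)
    rw [← hμmax]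
    exact h μ hμ

end XiScale

variable (F : Type) [Field F] [CharZero F]
variable (I : Type) [Fintype I] [DecidableEq I]
variable (E : Type) [Fintype E] [DecidableEq E]

theorem slope_le_iff_monomial_degree_bound
    (src tgt : E → I) (m : I → ℚ) (n : I → ℕ) (f : KK F I)
    (hf : f ∈ LaurentIn F I n) :
    SlopeLE F I E src tgt m n f ↔
      ∀ (P : MvPolynomial (I × ℕ) F) (D : (I × ℕ) →₀ ℕ),
        f * algebraMap (MvPolynomial (I × ℕ) F) (KK F I) (monomial D 1)
          = algebraMap (MvPolynomial (I × ℕ) F) (KK F I) P →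
        ∀ μ ∈ P.support, ∀ k : I → ℕ, (∀ i, k i ≤ n i) →
          ((∑ i : I, ∑ a ∈ Finset.range (k i), ((μ (i, a) : ℤ) - (D (i, a) : ℤ)) : ℤ) : ℚ)
            ≤ dotQ I m k + formE I E src tgt k (fun i => n i - k i) := by
  simp only [sum_range_sub_eq_weight_xiWeight]
  constructor
  · intro hslope P D hPD μ hμ k hk
    exact (limFiniteAtInfty_xiScale_iff k hPD _).mp (hslope k hk) μ hμ
  · intro hbound k hk
    obtain ⟨P, D, hPD⟩ := exists_mul_monomial_eq_of_mem_laurentIn hf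
    exact (limFiniteAtInfty_xiScale_iff k hPD _).mpr fun μ hμ => hbound P D hPD μ hμ k hk
end

section
/- Let V^+, V^- be Q-graded vector spaces with subspaces B_r^± ⊂ V^± for r ∈ Q, and suppose a pairing ⟨·,·⟩: V^+ × V^- → F satisfies the orthogonality property ⟨∏→_r a_r, ∏→_r b_r⟩ = ∏_r ⟨a_r, b_r⟩ for a_r ∈ B_r^+, b_r ∈ B_r^- (almost all equal to 1), where ∏→ denotes products in increasing order of r. If the pairing on V^+ × V^- is non-degenerate and the multiplication maps ⊗→_r B_r^± → V^± are surjective, then each restricted pairing B_r^+ × B_r^- → F is non-degenerate. -/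
/-!
If `x ∈ B_r⁺` is orthogonal to `B_r⁻`, write `x` as the ordered product whose only factor
different from `1` sits in slot `r`. Every ordered product `∏→ b_s` of elements `b_s ∈ B_s⁻`
is also an ordered product over the same index set (pad with `1`s), so the orthogonality
property makes `⟨x, ∏→ b_s⟩` a product containing the vanishing factor `⟨x, b_r⟩`. These
ordered products span `V⁻`, hence `x` pairs to zero with everything and is `0` by
non-degeneracy; the other side is the same argument for the flipped pairing.
-/

noncomputable section

/-- The product `a_{r_1} ⋯ a_{r_k}` taken in increasing order of `r`, where
`r_1 < … < r_k` are the elements of `rs`. -/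
def orderedProd {A : Type} [Monoid A] (rs : Finset ℚ) (a : ℚ → A) : A :=
  ((rs.sort (· ≤ ·)).map a).prod

theorem List.prod_map_filter_of_eq_one {α M : Type*} [Monoid M] {p : α → Prop}
    [DecidablePred p] {f : α → M} {l : List α} (h : ∀ x ∈ l, ¬p x → f x = 1) :
    ((l.filter p).map f).prod = (l.map f).prod := by
  induction l with
  | nil => rfl
  | cons x l ih =>
    have ih := ih fun y hy => h y (List.mem_cons_of_mem x hy)
    by_cases hx : p x
    · simp [hx, ih]
    · simp [hx, ih, h x List.mem_cons_self hx]

theorem Finset.sort_filter_mem_of_subset {α : Type*} [LinearOrder α] {s t : Finset α}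
    (hst : s ⊆ t) : (t.sort (· ≤ ·)).filter (· ∈ s) = s.sort (· ≤ ·) := by
  have hl : ((t.sort (· ≤ ·)).filter (· ∈ s)).toFinset = s := by
    ext x
    simpa using fun hx => hst hx
  conv_rhs => rw [← hl]
  exact ((List.toFinset_sort _ ((t.sort_nodup _).filter _)).2 ((t.pairwise_sort _).filter _)).symm

section OrderedProd

variable {A : Type} [Monoid A]

theorem orderedProd_congr {rs : Finset ℚ} {a b : ℚ → A} (h : ∀ r ∈ rs, a r = b r) :
    orderedProd rs a = orderedProd rs b := by
  unfold orderedProd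
  rw [List.map_congr_left fun r hr => h r ((rs.mem_sort _).1 hr)]

theorem orderedProd_eq_of_subset {s t : Finset ℚ} {a : ℚ → A} (hst : s ⊆ t)
    (h : ∀ r ∈ t, r ∉ s → a r = 1) : orderedProd t a = orderedProd s a := by
  unfold orderedProd
  rw [← Finset.sort_filter_mem_of_subset hst,
    List.prod_map_filter_of_eq_one fun r hr => h r ((t.mem_sort _).1 hr)]

theorem orderedProd_mulSingle {rs : Finset ℚ} {r : ℚ} (hr : r ∈ rs) (x : A) :
    orderedProd rs (Pi.mulSingle r x) = x := by
  rw [orderedProd_eq_of_subset (a := Pi.mulSingle r x) (Finset.singleton_subset_iff.2 hr)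
    fun s _ hs => by simp_all]
  simp [orderedProd]

theorem orderedProd_insert_mulIndicator (rs : Finset ℚ) (r : ℚ) (b : ℚ → A) :
    orderedProd (insert r rs) ((rs : Set ℚ).mulIndicator b) = orderedProd rs b := by
  rw [orderedProd_eq_of_subset (Finset.subset_insert r rs)
    fun s _ hs => Set.mulIndicator_of_notMem (Finset.mem_coe.not.2 hs) b]
  exact orderedProd_congr fun s hs => Set.mulIndicator_of_mem (Finset.mem_coe.2 hs) b

end OrderedProd

def orderedProds {A : Type} [Monoid A] (B : ℚ → Submonoid A) : Set A :=
  {x | ∃ (rs : Finset ℚ) (a : ℚ → A), (∀ r, a r ∈ B r) ∧ x = orderedProd rs a}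

section Pairing

variable {F Ap Am : Type} [CommSemiring F] [Semiring Ap] [Module F Ap] [Semiring Am]
  [Module F Am] {P : Ap →ₗ[F] Am →ₗ[F] F} {Bp : ℚ → Submonoid Ap} {Bm : ℚ → Submonoid Am}

variable (P Bp Bm) in
def IsMultiplicativeOnOrderedProds : Prop :=
  ∀ (rs : Finset ℚ) (a : ℚ → Ap) (b : ℚ → Am), (∀ r, a r ∈ Bp r) → (∀ r, b r ∈ Bm r) →
    (∀ r ∉ rs, a r = 1) → (∀ r ∉ rs, b r = 1) →
    P (orderedProd rs a) (orderedProd rs b) = ∏ r ∈ rs, P (a r) (b r)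

theorem IsMultiplicativeOnOrderedProds.flip (hmult : IsMultiplicativeOnOrderedProds P Bp Bm) :
    IsMultiplicativeOnOrderedProds P.flip Bm Bp :=
  fun rs b a hb ha hb1 ha1 => hmult rs a b ha hb ha1 hb1

theorem pairing_orderedProd_eq_zero_of_forall_pairing_eq_zero
    (hmult : IsMultiplicativeOnOrderedProds P Bp Bm)
    {r : ℚ} {x : Ap} (hx : x ∈ Bp r) (h0 : ∀ y ∈ Bm r, P x y = 0)
    (rs : Finset ℚ) {b : ℚ → Am} (hb : ∀ s, b s ∈ Bm s) :
    P x (orderedProd rs b) = 0 := by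
  have hmem : ∀ s, (rs : Set ℚ).mulIndicator b s ∈ Bm s := fun s => by
    by_cases hs : s ∈ (rs : Set ℚ)
    · simpa [Set.mulIndicator_of_mem hs] using hb s
    · simp [Set.mulIndicator_of_notMem hs]
  have hprod := hmult (insert r rs) (Pi.mulSingle r x) ((rs : Set ℚ).mulIndicator b)
    (fun s => by
      by_cases hs : s = r
      · subst hs; simpa using hx
      · simp [hs])
    hmem
    (fun s hs => by simp_all)
    (fun s hs => Set.mulIndicator_of_notMem (fun h => hs (rs.mem_insert_of_mem h)) b)
  rw [orderedProd_mulSingle (rs.mem_insert_self r), orderedProd_insert_mulIndicator] at hprod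
  rw [hprod]
  exact Finset.prod_eq_zero (rs.mem_insert_self r) (by simpa using h0 _ (hmem r))

theorem eq_zero_of_forall_restricted_pairing_eq_zero
    (hmult : IsMultiplicativeOnOrderedProds P Bp Bm)
    (hnd : ∀ x : Ap, (∀ y : Am, P x y = 0) → x = 0)
    (hspan : Submodule.span F (orderedProds Bm) = ⊤)
    {r : ℚ} {x : Ap} (hx : x ∈ Bp r) (h0 : ∀ y ∈ Bm r, P x y = 0) : x = 0 := by
  refine hnd x fun y => ?_
  have hy : y ∈ Submodule.span F _ := hspan ▸ Submodule.mem_top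
  induction hy using Submodule.span_induction with
  | mem y hy =>
    obtain ⟨rs, b, hb, rfl⟩ := hy
    exact pairing_orderedProd_eq_zero_of_forall_pairing_eq_zero hmult hx h0 rs hb
  | zero => simp
  | add y z _ _ hy hz => simp [hy, hz]
  | smul c y _ hy => simp [hy]

end Pairing

/-- Let `B_r^± ⊆ A^±` be subalgebras (`r ∈ ℚ`) and `⟨·,·⟩ : A⁺ × A⁻ → F`
a pairing satisfying `⟨∏→ a_r, ∏→ b_r⟩ = ∏ ⟨a_r, b_r⟩` on ordered products of elements
`a_r ∈ B_r⁺`, `b_r ∈ B_r⁻` (almost all equal to `1`). If the pairing is non-degenerate and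
the multiplication maps `⊗→ B_r^± → A^±` are surjective (ordered products span), then each
restricted pairing `B_r⁺ × B_r⁻ → F` is non-degenerate. -/
theorem restricted_pairing_nondegenerate
    (F Ap Am : Type) [Field F] [Ring Ap] [Algebra F Ap] [Ring Am] [Algebra F Am]
    (P : Ap →ₗ[F] Am →ₗ[F] F)
    (Bp : ℚ → Subalgebra F Ap) (Bm : ℚ → Subalgebra F Am)
    (hmult : ∀ (rs : Finset ℚ) (a : ℚ → Ap) (b : ℚ → Am),
      (∀ r, a r ∈ Bp r) → (∀ r, b r ∈ Bm r) →
      (∀ r ∉ rs, a r = 1) → (∀ r ∉ rs, b r = 1) →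
      P (orderedProd rs a) (orderedProd rs b) = ∏ r ∈ rs, P (a r) (b r))
    (hndp : ∀ x : Ap, (∀ y : Am, P x y = 0) → x = 0)
    (hndm : ∀ y : Am, (∀ x : Ap, P x y = 0) → y = 0)
    (hsurjp : Submodule.span F {x : Ap |
        ∃ (rs : Finset ℚ) (a : ℚ → Ap), (∀ r, a r ∈ Bp r) ∧ x = orderedProd rs a} = ⊤)
    (hsurjm : Submodule.span F {y : Am |
        ∃ (rs : Finset ℚ) (b : ℚ → Am), (∀ r, b r ∈ Bm r) ∧ y = orderedProd rs b} = ⊤) :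
    ∀ r : ℚ,
      (∀ x ∈ Bp r, (∀ y ∈ Bm r, P x y = 0) → x = 0) ∧
      (∀ y ∈ Bm r, (∀ x ∈ Bp r, P x y = 0) → y = 0) := by
  have hmult' : IsMultiplicativeOnOrderedProds P (fun r => (Bp r).toSubmonoid)
      (fun r => (Bm r).toSubmonoid) := hmult
  exact fun _ =>
    ⟨fun _ hx h0 => eq_zero_of_forall_restricted_pairing_eq_zero hmult' hndp hsurjm hx h0,
      fun _ hy h0 => eq_zero_of_forall_restricted_pairing_eq_zero hmult'.flip hndm hsurjp hy h0⟩

end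
end

section
/- Let V^± and B_r^± be as above, with dual bases {a_{r,s}}_s ⊂ B_r^+ and {b_{r,s}}_s ⊂ B_r^- under the restricted pairings (with a_{r,0} = b_{r,0} = 1), and suppose the pairing satisfies ⟨∏→ a_{r,s_r}, ∏→ b_{r,t_r}⟩ = ∏_r δ_{s_r,t_r}. Then the ordered-product vectors {∏→_r a_{r,s_r}} (over all finitely-supported index collections {s_r}) are linearly independent in V^+; in particular the multiplication map ⊗→_r B_r^+ → V^+ is injective. -/
noncomputable section

/-- Let `B_r^± ⊆ A^±` be subalgebras with elements
`{a_{r,s}}_{s ∈ ℕ} ⊆ B_r⁺`, `{b_{r,s}}_{s ∈ ℕ} ⊆ B_r⁻`, `a_{r,0} = b_{r,0} = 1`, such that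
`⟨∏→ a_{r,s_r}, ∏→ b_{r,t_r}⟩ = ∏_r δ_{s_r,t_r}` for all finitely supported collections of
indices. Then the ordered products `∏→_r a_{r,s_r}` are linearly independent in `A⁺`;
in particular the multiplication map `⊗→_r B_r⁺ → A⁺` is injective. -/
theorem ordered_products_linearIndependent
    (F Ap Am : Type) [Field F] [Ring Ap] [Algebra F Ap] [Ring Am] [Algebra F Am]
    (P : Ap →ₗ[F] Am →ₗ[F] F)
    (Bp : ℚ → Subalgebra F Ap) (Bm : ℚ → Subalgebra F Am)
    (a : ℚ → ℕ → Ap) (b : ℚ → ℕ → Am)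
    (hamem : ∀ r s, a r s ∈ Bp r) (hbmem : ∀ r s, b r s ∈ Bm r)
    (ha0 : ∀ r, a r 0 = 1) (hb0 : ∀ r, b r 0 = 1)
    (hdual : ∀ s t : ℚ →₀ ℕ,
      P (orderedProd s.support (fun r => a r (s r)))
        (orderedProd t.support (fun r => b r (t r)))
      = if s = t then 1 else 0) :
    LinearIndependent F
      (fun s : ℚ →₀ ℕ => orderedProd s.support (fun r => a r (s r))) := by
  rw [linearIndependent_iff']
  intro S g hg t ht
  have h := congrArg (fun v => P v (orderedProd t.support (fun r => b r (t r)))) hg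
  simp only [map_sum, map_smul, LinearMap.sum_apply, LinearMap.smul_apply, map_zero,
    LinearMap.zero_apply, hdual, smul_eq_mul, mul_ite, mul_one, mul_zero] at h
  rwa [Finset.sum_ite_eq' S t g, if_pos ht] at h

end
end
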